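/- Let (V, φ) be a Lie algebroid on X with φ surjective, and X_n a smooth hypersurface section. Define V_n := ker(ψ) where ψ : V|_{X_n} → N_{X_n} is the composition of φ|_{X_n} with the projection TX|_{X_n} → N_{X_n}. Then φ|_{X_n} maps V_n into TX_n, and the resulting pair (V_n, φ_n) is a Lie algebroid on X_n; moreover there is a short exact sequence 0 → V_n → V|_{X_n} → O_X(X_n)|_{X_n} → 0. -/
import Mathlib


/-!
Statement 14: Let `(V, φ)` be a Lie algebroid on `X` with `φ` surjective, and `X_n` a
smooth hypersurface section.  Define `V_n := ker ψ`, where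
`ψ : V|_{X_n} → N_{X_n} = O_X(X_n)|_{X_n}` is the composition of `φ|_{X_n}` with the
projection `TX|_{X_n} → N_{X_n}`.  Then `φ|_{X_n}` maps `V_n` into `TX_n`, the pair
`(V_n, φ_n)` is a Lie algebroid on `X_n`, and there is a short exact sequence
`0 → V_n → V|_{X_n} → O_X(X_n)|_{X_n} → 0`.

Algebraic (Lie–Rinehart) model: `R` is the ring of functions on `X`, the smooth
hypersurface `X_n` is cut out by the principal ideal `I = (h)`, and `TX_n` consists of
the derivations preserving `I`.  Then `V_n = {v ∈ V | φ(v)(I) ⊆ I}` (the sections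
whose anchor is tangent to `X_n`), `N_{X_n} = O_X(X_n)|_{X_n} ≅ R/I` via evaluation on
`h`, and `ψ(v) = φ(v)(h) mod I`.  Conclusions: `V_n` is a submodule, it is closed
under the bracket — so `(V_n, φ_n)` is a Lie algebroid (the Leibniz rule being
inherited) whose anchor is tangent to `X_n` — it is exactly `ker ψ`, and (smoothness
of the hypersurface providing a transverse derivation, and `φ` being surjective) `ψ`
is surjective, giving the short exact sequence `0 → V_n → V|_{X_n} → N_{X_n} → 0`.
-/

variable {R : Type*} [CommRing R] [Algebra ℂ R]
variable {L : Type*} [LieRing L] [Module R L]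

theorem hypersurface_lie_algebroid
    (φ : L →ₗ[R] Derivation ℂ R R)
    (hLeib : ∀ (u v : L) (f : R), ⁅u, f • v⁆ = f • ⁅u, v⁆ + φ u f • v)
    (hanchor : ∀ u v : L, φ ⁅u, v⁆ = ⁅φ u, φ v⁆)
    (hsurj : ∀ d : Derivation ℂ R R, ∃ v : L, φ v = d)   -- the anchor is surjective
    (h : R)                                               -- an equation of `X_n`
    (htrans : ∃ d : Derivation ℂ R R, d h = 1)            -- smoothness/transversality
    -- `ψ : V|_{X_n} → N_{X_n} ≅ R/I`, `v ↦ φ(v)(h) mod I` :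
    (ψ : L → R ⧸ Ideal.span {h})
    (hψ : ∀ v : L, ψ v = Ideal.Quotient.mk (Ideal.span {h}) (φ v h)) :
    -- `V_n = {v | φ(v) is tangent to X_n}` is a submodule:
    (∃ W : Submodule R L,
        (W : Set L) = {v : L | ∀ f ∈ Ideal.span {h}, φ v f ∈ Ideal.span {h}}) ∧
    -- `V_n` is closed under the bracket, so `(V_n, φ_n)` is a Lie algebroid on `X_n`:
    (∀ v w : L, (∀ f ∈ Ideal.span {h}, φ v f ∈ Ideal.span {h}) →
      (∀ f ∈ Ideal.span {h}, φ w f ∈ Ideal.span {h}) →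
      ∀ f ∈ Ideal.span {h}, φ ⁅v, w⁆ f ∈ Ideal.span {h}) ∧
    -- `V_n = ker ψ` :
    (∀ v : L, ψ v = 0 ↔ ∀ f ∈ Ideal.span {h}, φ v f ∈ Ideal.span {h}) ∧
    -- `ψ` is surjective, yielding the short exact sequence
    -- `0 → V_n → V|_{X_n} → O_X(X_n)|_{X_n} → 0` :
    Function.Surjective ψ := by
  set I := Ideal.span {h} with hI
  have key : ∀ v : L, φ v h ∈ I → ∀ f ∈ I, φ v f ∈ I := by
    intro v hv f hf
    rw [hI, Ideal.mem_span_singleton] at hf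
    obtain ⟨r, rfl⟩ := hf
    have : φ v (h * r) = h * φ v r + r * φ v h := by
      simpa [mul_comm] using (φ v).leibniz h r
    rw [this]
    exact I.add_mem (Ideal.mul_mem_right _ _ (Ideal.subset_span rfl))
      (Ideal.mul_mem_left _ _ hv)
  refine ⟨⟨{ carrier := {v : L | ∀ f ∈ I, φ v f ∈ I}
             add_mem' := ?_
             zero_mem' := ?_
             smul_mem' := ?_ }, rfl⟩, ?_, ?_, ?_⟩
  · intro a b ha hb f hf
    have : φ (a + b) f = φ a f + φ b f := by simp
    rw [this]; exact I.add_mem (ha f hf) (hb f hf)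
  · intro f hf; simp
  · intro r v hv f hf
    have : φ (r • v) f = r * φ v f := by simp
    rw [this]; exact Ideal.mul_mem_left _ _ (hv f hf)
  · intro v w hv hw f hf
    have : φ ⁅v, w⁆ f = φ v (φ w f) - φ w (φ v f) := by
      rw [hanchor]; rfl
    rw [this]
    exact I.sub_mem (hv _ (hw f hf)) (hw _ (hv f hf))
  · intro v
    rw [hψ, Ideal.Quotient.eq_zero_iff_mem]
    constructor
    · exact key v
    · intro hv; exact hv h (Ideal.subset_span rfl)
  · intro x
    obtain ⟨x, rfl⟩ := Ideal.Quotient.mk_surjective x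
    obtain ⟨d, hd⟩ := htrans
    obtain ⟨v, hv⟩ := hsurj (x • d)
    refine ⟨v, ?_⟩
    rw [hψ, hv]
    simp [hd]
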